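/- arXiv:2104.08488 — 2 statements merged into one kernel-verified Lean document; each statement's English description precedes it below -/
import Mathlib

section
/- Let H be a Hilbert space (real or complex), A a positive operator on H, ε ∈ [0,1), and x, y ∈ H. Then |⟨x, y⟩_A| ≤ ε‖x‖_A‖y‖_A if and only if there exists z ∈ H such that ⟨x, z⟩_A = 0 and ‖z − y‖_A ≤ ε‖y‖_A. -/
noncomputable section

/-- The seminorm induced by a positive operator `A`: `‖x‖_A = √(re ⟪A x, x⟫)`. -/
def anorm {𝕜 H : Type*} [RCLike 𝕜] [NormedAddCommGroup H] [InnerProductSpace 𝕜 H]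
    (A : H →L[𝕜] H) (x : H) : ℝ :=
  Real.sqrt (RCLike.re (inner 𝕜 (A x) x))

/-- The semi-inner product induced by `A`: `⟨x, y⟩_A = ⟪A x, y⟫`. -/
def ainner {𝕜 H : Type*} [RCLike 𝕜] [NormedAddCommGroup H] [InnerProductSpace 𝕜 H]
    (A : H →L[𝕜] H) (x y : H) : 𝕜 :=
  (inner 𝕜 (A x) y)

/-- `T` is `A`-bounded. -/
def IsABounded {𝕜 H : Type*} [RCLike 𝕜] [NormedAddCommGroup H] [InnerProductSpace 𝕜 H]
    (A T : H →L[𝕜] H) : Prop :=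
  ∃ c > 0, ∀ x : H, anorm A (T x) ≤ c * anorm A x

/-- The `A`-norm of an operator `T`: `sup {‖Tx‖_A : ‖x‖_A = 1}`. -/
def opAnorm {𝕜 H : Type*} [RCLike 𝕜] [NormedAddCommGroup H] [InnerProductSpace 𝕜 H]
    (A T : H →L[𝕜] H) : ℝ :=
  sSup {r : ℝ | ∃ x : H, anorm A x = 1 ∧ r = anorm A (T x)}

/-- `(ε,A)`-approximate orthogonality in the sense of Chmieliński, for vectors. -/
def VOrthEps {𝕜 H : Type*} [RCLike 𝕜] [NormedAddCommGroup H] [InnerProductSpace 𝕜 H]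
    (A : H →L[𝕜] H) (ε : ℝ) (x y : H) : Prop :=
  ∀ l : 𝕜, anorm A x ^ 2 - 2 * ε * anorm A x * anorm A (l • y) ≤ anorm A (x + l • y) ^ 2

/-- `(ε,A)`-approximate orthogonality in the sense of Chmieliński, for operators. -/
def OpOrthEps {𝕜 H : Type*} [RCLike 𝕜] [NormedAddCommGroup H] [InnerProductSpace 𝕜 H]
    (A T S : H →L[𝕜] H) (ε : ℝ) : Prop :=
  ∀ l : 𝕜, opAnorm A T ^ 2 - 2 * ε * opAnorm A T * opAnorm A (l • S) ≤ opAnorm A (T + l • S) ^ 2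

end

/-!
The witness is the `A`-orthogonal projection `z = y - (⟨x, y⟩_A / ‖x‖_A²) x`, for which
`‖z - y‖_A = |⟨x, y⟩_A| / ‖x‖_A`. If `‖x‖_A = 0`, Cauchy–Schwarz gives `⟨x, y⟩_A = 0`, and with
division by zero being zero the same formula yields `z = y`. Conversely, Cauchy–Schwarz for the
semi-inner product gives `|⟨x, y⟩_A| = |⟨x, y - z⟩_A| ≤ ‖x‖_A ‖y - z‖_A`.
-/

section

open RCLike

variable {𝕜 H : Type*} [RCLike 𝕜] [NormedAddCommGroup H] [InnerProductSpace 𝕜 H]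
  (A : H →L[𝕜] H)

lemma anorm_nonneg (x : H) : 0 ≤ anorm A x := Real.sqrt_nonneg _

lemma anorm_smul (c : 𝕜) (x : H) : anorm A (c • x) = ‖c‖ * anorm A x := by
  unfold anorm
  rw [map_smul, inner_smul_left, inner_smul_right, ← mul_assoc, RCLike.conj_mul,
    ← ofReal_pow, re_ofReal_mul, Real.sqrt_mul (by positivity),
    Real.sqrt_sq (norm_nonneg _)]

lemma anorm_sub_comm (x y : H) : anorm A (x - y) = anorm A (y - x) := by
  unfold anorm
  rw [← neg_sub, map_neg, inner_neg_neg]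

lemma ainner_sub_right (x y z : H) :
    ainner A x (y - z) = ainner A x y - ainner A x z :=
  inner_sub_right _ _ _

lemma ainner_smul_right (x y : H) (c : 𝕜) :
    ainner A x (c • y) = c * ainner A x y :=
  inner_smul_right _ _ _

lemma anorm_div_anorm_sq_smul (t : 𝕜) (x : H) :
    anorm A ((t / (anorm A x : 𝕜) ^ 2) • x) = ‖t‖ / anorm A x := by
  rw [anorm_smul, norm_div, norm_pow, norm_ofReal, abs_of_nonneg (anorm_nonneg A x)]
  rcases eq_or_ne (anorm A x) 0 with hx | hx
  · simp [hx]
  · field_simp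

namespace ContinuousLinearMap.IsPositive

variable {A}

abbrev preInnerProductCore (hA : A.IsPositive) : PreInnerProductSpace.Core 𝕜 H where
  inner x y := ainner A x y
  conj_inner_symm x y := by
    rw [ainner, ainner, inner_conj_symm, hA.inner_left_eq_inner_right]
  re_inner_nonneg := hA.re_inner_nonneg_left
  add_left x y z := by simp only [ainner, map_add, inner_add_left]
  smul_left x y r := by simp only [ainner, map_smul, inner_smul_left]

theorem norm_ainner_le (hA : A.IsPositive) (x y : H) :
    ‖ainner A x y‖ ≤ anorm A x * anorm A y :=
  @InnerProductSpace.Core.norm_inner_le_norm 𝕜 H _ _ _ hA.preInnerProductCore x y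

theorem ainner_self_eq_anorm_sq (hA : A.IsPositive) (x : H) :
    ainner A x x = (anorm A x : 𝕜) ^ 2 := by
  rw [← ofReal_pow, anorm, Real.sq_sqrt (hA.re_inner_nonneg_left x)]
  refine (conj_eq_iff_re.mp ?_).symm
  rw [ainner, inner_conj_symm, hA.inner_left_eq_inner_right]

theorem ainner_sub_div_anorm_sq_smul_eq_zero (hA : A.IsPositive) (x y : H) :
    ainner A x (y - (ainner A x y / (anorm A x : 𝕜) ^ 2) • x) = 0 := by
  rw [ainner_sub_right, ainner_smul_right, hA.ainner_self_eq_anorm_sq]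
  rcases eq_or_ne (anorm A x) 0 with hx | hx
  · have : ainner A x y = 0 := by simpa [hx] using hA.norm_ainner_le x y
    simp [this]
  · rw [div_mul_cancel₀ _ (pow_ne_zero 2 (ofReal_ne_zero.mpr hx)), sub_self]

end ContinuousLinearMap.IsPositive

end

theorem stmt_2_general {𝕜 H : Type*} [RCLike 𝕜] [NormedAddCommGroup H] [InnerProductSpace 𝕜 H]
    (A : H →L[𝕜] H) (hA : A.IsPositive) (ε : ℝ) (hε0 : 0 ≤ ε)
    (x y : H) :
    ‖ainner A x y‖ ≤ ε * anorm A x * anorm A y ↔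
      ∃ z : H, ainner A x z = 0 ∧ anorm A (z - y) ≤ ε * anorm A y := by
  constructor
  · intro h
    refine ⟨_, hA.ainner_sub_div_anorm_sq_smul_eq_zero x y, ?_⟩
    rw [anorm_sub_comm, sub_sub_cancel, anorm_div_anorm_sq_smul]
    refine div_le_of_le_mul₀ (anorm_nonneg A x) (mul_nonneg hε0 (anorm_nonneg A y))
      (h.trans_eq (mul_right_comm _ _ _))
  · rintro ⟨z, hz, hzy⟩
    calc ‖ainner A x y‖ = ‖ainner A x (y - z)‖ := by rw [ainner_sub_right, hz, sub_zero]
      _ ≤ anorm A x * anorm A (y - z) := hA.norm_ainner_le x (y - z)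
      _ ≤ anorm A x * (ε * anorm A y) :=
        mul_le_mul_of_nonneg_left (by rwa [anorm_sub_comm]) (anorm_nonneg A x)
      _ = ε * anorm A x * anorm A y := by ring

/-- `|⟨x, y⟩_A| ≤ ε‖x‖_A‖y‖_A` iff there exists `z` with `⟨x, z⟩_A = 0` and
`‖z − y‖_A ≤ ε‖y‖_A`. -/
theorem stmt_2 {𝕜 H : Type*} [RCLike 𝕜] [NormedAddCommGroup H] [InnerProductSpace 𝕜 H]
    [CompleteSpace H] (A : H →L[𝕜] H) (hA : A.IsPositive) (ε : ℝ) (hε0 : 0 ≤ ε) (hε1 : ε < 1)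
    (x y : H) :
    ‖ainner A x y‖ ≤ ε * anorm A x * anorm A y ↔
      ∃ z : H, ainner A x z = 0 ∧ anorm A (z - y) ≤ ε * anorm A y :=
  stmt_2_general A hA ε hε0 x y
end

section
/- Let ε, ε₁ ∈ [0,1) with ε₁ > ε. Then there exists a real number a with εε₁ − √(1−ε²)√(1−ε₁²) < a < εε₁ + √(1−ε²)√(1−ε₁²) such that (i) aε₁ > ε, and (ii) (aε₁ − ε)/(√(1−ε₁²)·b) < 1, where b > 0 satisfies a² + b² = 1. -/
/-- for `ε, ε₁ ∈ [0,1)` with `ε₁ > ε`, there exists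
`a ∈ (εε₁ − √(1−ε²)√(1−ε₁²), εε₁ + √(1−ε²)√(1−ε₁²))` such that, with `b > 0` satisfying
`a² + b² = 1`, one has `aε₁ > ε` and `(aε₁ − ε)/(√(1−ε₁²)·b) < 1`. -/
theorem stmt_17 (ε ε₁ : ℝ) (hε0 : 0 ≤ ε) (hε1 : ε < 1) (hε₁0 : 0 ≤ ε₁) (hε₁1 : ε₁ < 1)
    (h : ε < ε₁) :
    ∃ a b : ℝ,
      ε * ε₁ - Real.sqrt (1 - ε ^ 2) * Real.sqrt (1 - ε₁ ^ 2) < a ∧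
      a < ε * ε₁ + Real.sqrt (1 - ε ^ 2) * Real.sqrt (1 - ε₁ ^ 2) ∧
      0 < b ∧ a ^ 2 + b ^ 2 = 1 ∧
      ε < a * ε₁ ∧
      (a * ε₁ - ε) / (Real.sqrt (1 - ε₁ ^ 2) * b) < 1 := by
  set u := Real.sqrt (1 - ε ^ 2) with hu
  set v := Real.sqrt (1 - ε₁ ^ 2) with hv
  have hε₁pos : 0 < ε₁ := lt_of_le_of_lt hε0 h
  have hu2 : u ^ 2 = 1 - ε ^ 2 := Real.sq_sqrt (by nlinarith)
  have hv2 : v ^ 2 = 1 - ε₁ ^ 2 := Real.sq_sqrt (by nlinarith)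
  have hupos : 0 < u := Real.sqrt_pos.2 (by nlinarith)
  have hvpos : 0 < v := Real.sqrt_pos.2 (by nlinarith)
  set w := u * ε₁ - ε * v with hwdef
  have hwpos : 0 < w := by
    have h1 : (u * ε₁) ^ 2 - (ε * v) ^ 2 = ε₁ ^ 2 - ε ^ 2 := by nlinarith [hu2, hv2]
    nlinarith [mul_pos hupos hε₁pos, mul_nonneg hε0 hvpos.le]
  have hid : (ε * ε₁ + u * v) ^ 2 + w ^ 2 = 1 := by nlinarith [hu2, hv2]
  set t := min (u * v) (v * w / ε₁) / 2 with htdef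
  have hminpos : 0 < min (u * v) (v * w / ε₁) :=
    lt_min (mul_pos hupos hvpos) (div_pos (mul_pos hvpos hwpos) hε₁pos)
  have ht0 : 0 < t := by positivity
  have htuv : t < u * v := by
    have h1 := min_le_left (u * v) (v * w / ε₁)
    rw [htdef]; linarith
  have htk : t * ε₁ < v * w := by
    have h1 := min_le_right (u * v) (v * w / ε₁)
    have h2 : t < v * w / ε₁ := by rw [htdef]; linarith
    have h3 : t * ε₁ < (v * w / ε₁) * ε₁ := mul_lt_mul_of_pos_right h2 hε₁pos
    rwa [div_mul_cancel₀ _ (ne_of_gt hε₁pos)] at h3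
  set a := ε * ε₁ + u * v - t with hadef
  have ha0 : 0 ≤ a := by nlinarith [mul_nonneg hε0 hε₁0]
  have halt : a < ε * ε₁ + u * v := by rw [hadef]; linarith
  have ha02 : (ε * ε₁ + u * v) ^ 2 ≤ 1 := by linarith [sq_nonneg w]
  have haa0 : a ^ 2 < (ε * ε₁ + u * v) ^ 2 := by
    exact pow_lt_pow_left₀ halt ha0 two_ne_zero
  have ha1 : a ^ 2 < 1 := lt_of_lt_of_le haa0 ha02
  set b := Real.sqrt (1 - a ^ 2) with hb
  have hbpos : 0 < b := Real.sqrt_pos.2 (by linarith)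
  have hb2 : b ^ 2 = 1 - a ^ 2 := Real.sq_sqrt (by linarith)
  have hnum : a * ε₁ - ε = v * w - t * ε₁ := by
    rw [hadef, hwdef]; linear_combination ε * hv2
  have hεa : ε < a * ε₁ := by
    have := mul_pos ht0 hε₁pos
    linarith [htk]
  have hwb : w ≤ b := by
    have hsq : w ^ 2 ≤ 1 - a ^ 2 := by linarith [hid, haa0]
    calc w = Real.sqrt (w ^ 2) := (Real.sqrt_sq hwpos.le).symm
    _ ≤ Real.sqrt (1 - a ^ 2) := Real.sqrt_le_sqrt hsq
  refine ⟨a, b, by rw [hadef]; linarith, halt, hbpos, by linarith, hεa, ?_⟩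
  rw [div_lt_one (mul_pos hvpos hbpos)]
  have h5 : v * w ≤ v * b := mul_le_mul_of_nonneg_left hwb hvpos.le
  have h6 : 0 < t * ε₁ := mul_pos ht0 hε₁pos
  linarith
end
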